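/- arXiv:0909.2433 — 5 statements merged into one kernel-verified Lean document; each statement's English description precedes it below -/
import Mathlib

section
/- For every real number 0 < q < 1, every positive integer k, and every real t > 0, the q,k-gamma function and the q^k-gamma function are related by Γ_{q,k}(t) = [k]_q^{t/k - 1} · Γ_{q^k}(t/k). -/
/-- The q-number [t]_q = (1-q^t)/(1-q). -/
noncomputable def qNum (q t : ℝ) : ℝ := (1 - q ^ t) / (1 - q)

/-- The q,k-gamma function
Γ_{q,k}(t) = (1-q)^(1-t/k) · ∏_{j=0}^∞ (1-q^{k(j+1)})/(1-q^{t+jk}). -/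
noncomputable def qkGamma (q : ℝ) (k : ℕ) (t : ℝ) : ℝ :=
  (1 - q) ^ (1 - t / (k : ℝ)) *
    ∏' j : ℕ, (1 - q ^ ((k : ℝ) * ((j : ℝ) + 1))) / (1 - q ^ (t + (j : ℝ) * (k : ℝ)))

/-- The Q-gamma function Γ_Q(s) = (1-Q)^(1-s) · ∏_{j=0}^∞ (1-Q^{j+1})/(1-Q^{s+j}). -/
noncomputable def qGamma (Q s : ℝ) : ℝ :=
  (1 - Q) ^ (1 - s) * ∏' j : ℕ, (1 - Q ^ ((j : ℝ) + 1)) / (1 - Q ^ (s + (j : ℝ)))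

theorem qkGamma_eq_qGamma (q : ℝ) (hq0 : 0 < q) (hq1 : q < 1)
    (k : ℕ) (hk : 0 < k) (t : ℝ) (ht : 0 < t) :
    qkGamma q k t = qNum q (k : ℝ) ^ (t / (k : ℝ) - 1) * qGamma (q ^ k) (t / (k : ℝ)) := by
  have hq0' : (0:ℝ) ≤ q := hq0.le
  have hk0 : (0:ℝ) < (k:ℝ) := by exact_mod_cast hk
  have hqk1 : q ^ k < 1 := pow_lt_one₀ hq0' hq1 hk.ne'
  have h1q : 0 < 1 - q := by linarith
  have h1qk : 0 < 1 - q ^ k := by linarith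
  have hbase : ∀ x : ℝ, (q ^ k : ℝ) ^ x = q ^ ((k:ℝ) * x) := by
    intro x
    rw [← Real.rpow_natCast q k, ← Real.rpow_mul hq0']
  have hrq : q ^ (k:ℝ) = q ^ k := Real.rpow_natCast q k
  unfold qkGamma qGamma qNum
  have hprod : (∏' j : ℕ, (1 - q ^ ((k : ℝ) * ((j : ℝ) + 1))) / (1 - q ^ (t + (j : ℝ) * (k : ℝ))))
      = ∏' j : ℕ, (1 - (q^k) ^ ((j : ℝ) + 1)) / (1 - (q^k) ^ (t/(k:ℝ) + (j : ℝ))) := by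
    congr 1; funext j
    have he : (k:ℝ) * (t/(k:ℝ) + (j:ℝ)) = t + (j:ℝ) * (k:ℝ) := by field_simp
    rw [hbase, hbase, he]
  rw [hprod, hrq]
  have hfac : (1 - q) ^ (1 - t / (k:ℝ)) =
      ((1 - q ^ k) / (1 - q)) ^ (t / (k:ℝ) - 1) * (1 - q ^ k) ^ (1 - t / (k:ℝ)) := by
    rw [Real.div_rpow h1qk.le h1q.le, div_mul_eq_mul_div, ← Real.rpow_add h1qk]
    rw [show t / (k:ℝ) - 1 + (1 - t / (k:ℝ)) = 0 by ring, Real.rpow_zero]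
    rw [show (1 : ℝ) - t / (k:ℝ) = -(t / (k:ℝ) - 1) by ring, Real.rpow_neg h1q.le]
    rw [one_div]
  rw [hfac]; ring
end

section
/- For every real number 0 < q < 1, every positive integer k, and every real t > 0, the q,k-gamma function admits the Jackson q-integral representation Γ_{q,k}(t) = ∫_0^b x^{t-1} E_{q^k}^{-q^k x^k/[k]_q} d_q x, where b = [k]_q^{1/k}/(1-q^k)^{1/k}; explicitly, Γ_{q,k}(t) = (1-q) b ∑_{n=0}^∞ q^n (q^n b)^{t-1} E_{q^k}^{-q^k (q^n b)^k/[k]_q}. -/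
/-- The Q-factorial [n]_Q! = ∏_{j=1}^n (1-Q^j)/(1-Q). -/
noncomputable def qFact (Q : ℝ) (n : ℕ) : ℝ :=
  ∏ j ∈ Finset.range n, (1 - Q ^ (j + 1)) / (1 - Q)

/-- The Q-exponential E_Q^x = ∑_{n=0}^∞ Q^{n(n-1)/2} x^n/[n]_Q!. -/
noncomputable def qExp (Q x : ℝ) : ℝ :=
  ∑' n : ℕ, Q ^ (n * (n - 1) / 2) * x ^ n / qFact Q n

/-!
Put `Q = q^k` and `x = q^t`. Since `b^k = 1/(1-q)`, the argument of the `Q`-exponential in the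
`n`-th term is `-Q^(n+1)/(1-Q)` and the prefactors collect to `(1-q)^(1-t/k) xⁿ`, so the theorem
becomes `∏ⱼ (1 - Q^(j+1))/(1 - x Qʲ) = ∑ₙ xⁿ E_Q(-Q^(n+1)/(1-Q))`. This follows from Euler's two
expansions `∑ xⁿ/(Q;Q)ₙ = 1/(x;Q)_∞` and `E_Q(-z/(1-Q)) = (z;Q)_∞`; the second gives
`E_Q(-Q^(n+1)/(1-Q)) = (Q;Q)_∞/(Q;Q)ₙ`. Each expansion comes from the `Q`-difference equation of
its power series, `F(Qy) = (1-y) F(y)` resp. `G(y) = (1-y) G(Qy)`, iterated along `y, Qy, Q²y, …`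
and closed off by continuity of the series at `0`.
-/

open Filter Topology Finset

theorem Multipliable.tprod_mul_eq_of_succ_eq_mul {c u : ℕ → ℝ} {L : ℝ} (hc : Multipliable c)
    (hrec : ∀ n, u (n + 1) = c n * u n) (hu : Tendsto u atTop (𝓝 L)) :
    (∏' n, c n) * u 0 = L := by
  have hpartial : ∀ N, u N = (∏ j ∈ range N, c j) * u 0 := by
    intro N
    induction N with
    | zero => simp
    | succ N ih => rw [hrec, ih, prod_range_succ]; ring
  refine tendsto_nhds_unique ?_ hu
  simpa only [← hpartial] using hc.hasProd.tendsto_prod_nat.mul_const (u 0)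

theorem Multipliable.tprod_eq_of_eq_mul_succ {c u : ℕ → ℝ} (hc : Multipliable c)
    (hrec : ∀ n, u n = c n * u (n + 1)) (hu : Tendsto u atTop (𝓝 1)) :
    ∏' n, c n = u 0 := by
  have hpartial : ∀ N, u 0 = (∏ j ∈ range N, c j) * u N := by
    intro N
    induction N with
    | zero => simp
    | succ N ih => rw [ih, hrec N, prod_range_succ]; ring
  have hlim := hc.hasProd.tendsto_prod_nat.mul hu
  rw [mul_one] at hlim
  exact tendsto_nhds_unique hlim (by simpa only [← hpartial] using tendsto_const_nhds)

theorem multipliable_one_sub_mul_pow {Q : ℝ} (hQ0 : 0 ≤ Q) (hQ1 : Q < 1) (z : ℝ) :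
    Multipliable fun j : ℕ ↦ 1 - z * Q ^ j := by
  simpa only [sub_eq_add_neg] using
    Real.multipliable_one_add_of_summable ((summable_geometric_of_lt_one hQ0 hQ1).mul_left z).neg

theorem tendsto_tsum_mul_pow_nhds_zero {a : ℕ → ℝ} {r : ℝ} (hr : 0 < r)
    (ha : Summable fun n ↦ a n * r ^ n) :
    Tendsto (fun y ↦ ∑' n, a n * y ^ n) (𝓝 0) (𝓝 (a 0)) := by
  have hcont : ContinuousOn (fun y ↦ ∑' n, a n * y ^ n) (Set.Icc (-r) r) := by
    refine continuousOn_tsum (fun n ↦ by fun_prop) ha.abs fun n y hy ↦ ?_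
    rw [Real.norm_eq_abs, abs_mul, abs_mul, abs_pow, abs_pow, abs_of_pos hr]
    gcongr
    exact abs_le.mpr hy
  have h0 := hcont.continuousAt (Icc_mem_nhds (by linarith) hr)
  have hval : ∑' n, a n * (0 : ℝ) ^ n = a 0 :=
    (tsum_eq_single 0 fun n hn ↦ by simp [hn]).trans (by simp)
  simpa only [hval] using h0.tendsto

section QDifference

variable {Q : ℝ} {a σ : ℕ → ℝ}

theorem one_sub_pow_succ_ne_zero (hQ0 : 0 ≤ Q) (hQ1 : Q < 1) (n : ℕ) : 1 - Q ^ (n + 1) ≠ 0 :=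
  (sub_pos.mpr (pow_lt_one₀ hQ0 hQ1 n.succ_ne_zero)).ne'

theorem summable_mul_pow_of_coeff_rec (hQ0 : 0 ≤ Q) (hQ1 : Q < 1)
    (ha : ∀ n, a (n + 1) * (1 - Q ^ (n + 1)) = σ n * a n) {S : ℝ}
    (hσ : Tendsto σ atTop (𝓝 S)) {y : ℝ} (hy : |S| * |y| < 1) :
    Summable fun n ↦ a n * y ^ n := by
  have hratio : Tendsto (fun n ↦ |σ n / (1 - Q ^ (n + 1))| * |y|) atTop (𝓝 (|S| * |y|)) := by
    have hpow := (tendsto_pow_atTop_nhds_zero_of_lt_one hQ0 hQ1).comp (tendsto_add_atTop_nat 1)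
    simpa using ((hσ.div (hpow.const_sub 1) (by simp)).abs).mul_const |y|
  refine summable_of_ratio_norm_eventually_le (r := (|S| * |y| + 1) / 2) (by linarith) ?_
  filter_upwards [hratio.eventually_le_const (by linarith : |S| * |y| < (|S| * |y| + 1) / 2)]
    with n hn
  have hstep : a (n + 1) * y ^ (n + 1) = σ n / (1 - Q ^ (n + 1)) * y * (a n * y ^ n) := by
    rw [(eq_div_iff (one_sub_pow_succ_ne_zero hQ0 hQ1 n)).mpr (ha n)]
    ring
  rw [hstep, norm_mul, norm_mul, Real.norm_eq_abs, Real.norm_eq_abs]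
  gcongr

theorem tsum_mul_pow_sub_tsum_mul_pow_mul (ha : ∀ n, a (n + 1) * (1 - Q ^ (n + 1)) = σ n * a n)
    {y : ℝ} (hy : Summable fun n ↦ a n * y ^ n) (hQy : Summable fun n ↦ a n * (Q * y) ^ n) :
    ∑' n, a n * y ^ n - ∑' n, a n * (Q * y) ^ n = y * ∑' n, σ n * a n * y ^ n := by
  have hterm : ∀ n, a (n + 1) * y ^ (n + 1) - a (n + 1) * (Q * y) ^ (n + 1) =
      y * (σ n * a n * y ^ n) := by
    intro n
    rw [← ha n, mul_pow]
    ring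
  rw [← hy.tsum_sub hQy, (hy.sub hQy).tsum_eq_zero_add]
  simp only [hterm, pow_zero, sub_self, zero_add, tsum_mul_left]

end QDifference

/-- The q-Pochhammer symbol `(Q;Q)_n`. -/
noncomputable def qPochhammer (Q : ℝ) (n : ℕ) : ℝ :=
  ∏ j ∈ range n, (1 - Q ^ (j + 1))

section Euler

variable {Q : ℝ}

theorem qPochhammer_succ (Q : ℝ) (n : ℕ) :
    qPochhammer Q (n + 1) = qPochhammer Q n * (1 - Q ^ (n + 1)) :=
  prod_range_succ _ _

theorem qPochhammer_ne_zero (hQ0 : 0 ≤ Q) (hQ1 : Q < 1) (n : ℕ) : qPochhammer Q n ≠ 0 :=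
  prod_ne_zero_iff.mpr fun j _ ↦ one_sub_pow_succ_ne_zero hQ0 hQ1 j

theorem qFact_mul_pow_eq_qPochhammer (hQ1 : Q ≠ 1) (n : ℕ) :
    qFact Q n * (1 - Q) ^ n = qPochhammer Q n := by
  rw [qFact, qPochhammer, pow_eq_prod_const, ← prod_mul_distrib]
  exact prod_congr rfl fun j _ ↦ div_mul_cancel₀ _ (sub_ne_zero.mpr hQ1.symm)

theorem qExp_neg_div_one_sub (hQ0 : 0 ≤ Q) (hQ1 : Q < 1) (z : ℝ) :
    qExp Q (-(z / (1 - Q))) =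
      ∑' n, (-1) ^ n * Q ^ (n * (n - 1) / 2) / qPochhammer Q n * z ^ n := by
  refine tsum_congr fun n ↦ ?_
  rw [← qFact_mul_pow_eq_qPochhammer hQ1.ne n, neg_pow', div_pow]
  have hfact : qFact Q n ≠ 0 := by
    have := qFact_mul_pow_eq_qPochhammer hQ1.ne n ▸ qPochhammer_ne_zero hQ0 hQ1 n
    exact left_ne_zero_of_mul this
  have hpow : (1 - Q) ^ n ≠ 0 := pow_ne_zero _ (by linarith)
  field_simp

theorem tprod_one_sub_mul_pow_mul_tsum_inv_qPochhammer (hQ0 : 0 ≤ Q) (hQ1 : Q < 1) {x : ℝ}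
    (hx : |x| < 1) :
    (∏' j : ℕ, (1 - x * Q ^ j)) * ∑' n, (qPochhammer Q n)⁻¹ * x ^ n = 1 := by
  set F : ℝ → ℝ := fun y ↦ ∑' n, (qPochhammer Q n)⁻¹ * y ^ n
  have hcoeff : ∀ n, (qPochhammer Q (n + 1))⁻¹ * (1 - Q ^ (n + 1)) = 1 * (qPochhammer Q n)⁻¹ := by
    intro n
    rw [qPochhammer_succ, mul_inv, inv_mul_cancel_right₀ (one_sub_pow_succ_ne_zero hQ0 hQ1 n),
      one_mul]
  have hsum : ∀ y, |y| < 1 → Summable fun n ↦ (qPochhammer Q n)⁻¹ * y ^ n := fun y hy ↦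
    summable_mul_pow_of_coeff_rec hQ0 hQ1 hcoeff tendsto_const_nhds (by simpa using hy)
  have hsmall : ∀ n : ℕ, |Q ^ n * x| < 1 := fun n ↦ by
    rw [abs_mul, abs_pow, abs_of_nonneg hQ0]
    exact lt_of_le_of_lt (mul_le_of_le_one_left (abs_nonneg x) (pow_le_one₀ hQ0 hQ1.le)) hx
  have hshift : ∀ y, |y| < 1 → F (Q * y) = (1 - y) * F y := by
    intro y hy
    have hQy : |Q * y| < 1 := by
      rw [abs_mul, abs_of_nonneg hQ0]; nlinarith [abs_nonneg y]
    have := tsum_mul_pow_sub_tsum_mul_pow_mul hcoeff (hsum y hy) (hsum _ hQy)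
    simp only [one_mul] at this
    linear_combination -this
  have hlim : Tendsto (fun n : ℕ ↦ F (Q ^ n * x)) atTop (𝓝 1) := by
    have h := (tendsto_tsum_mul_pow_nhds_zero one_half_pos (hsum _ (by norm_num))).comp
      (by simpa using (tendsto_pow_atTop_nhds_zero_of_lt_one hQ0 hQ1).mul_const x)
    rwa [qPochhammer, prod_range_zero, inv_one] at h
  have key := (multipliable_one_sub_mul_pow hQ0 hQ1 x).tprod_mul_eq_of_succ_eq_mul
    (u := fun n ↦ F (Q ^ n * x)) (fun n ↦ by
      simp only [pow_succ', mul_assoc, hshift _ (hsmall n)]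
      ring) hlim
  simpa using key

theorem tprod_one_sub_mul_pow_eq_qExp (hQ0 : 0 ≤ Q) (hQ1 : Q < 1) (z : ℝ) :
    ∏' j : ℕ, (1 - z * Q ^ j) = qExp Q (-(z / (1 - Q))) := by
  set g : ℕ → ℝ := fun n ↦ (-1) ^ n * Q ^ (n * (n - 1) / 2) / qPochhammer Q n with hg
  set G : ℝ → ℝ := fun y ↦ ∑' n, g n * y ^ n with hG
  have hcoeff : ∀ n, g (n + 1) * (1 - Q ^ (n + 1)) = -Q ^ n * g n := by
    intro n
    simp only [hg]
    rw [Nat.triangle_succ, qPochhammer_succ, pow_succ (-1 : ℝ), pow_add Q]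
    field_simp [one_sub_pow_succ_ne_zero hQ0 hQ1 n, qPochhammer_ne_zero hQ0 hQ1 n]
  have hσ : Tendsto (fun n : ℕ ↦ -Q ^ n) atTop (𝓝 0) := by
    simpa using (tendsto_pow_atTop_nhds_zero_of_lt_one hQ0 hQ1).neg
  have hsum : ∀ y, Summable fun n ↦ g n * y ^ n := fun y ↦
    summable_mul_pow_of_coeff_rec hQ0 hQ1 hcoeff hσ (by simp)
  have hshift : ∀ y, G y = (1 - y) * G (Q * y) := by
    intro y
    have := tsum_mul_pow_sub_tsum_mul_pow_mul hcoeff (hsum y) (hsum (Q * y))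
    have hneg : ∑' n, -Q ^ n * g n * y ^ n = -G (Q * y) := by
      rw [← tsum_neg]
      exact tsum_congr fun n ↦ by rw [mul_pow]; ring
    rw [hneg] at this
    linear_combination this
  have hlim : Tendsto (fun n : ℕ ↦ G (Q ^ n * z)) atTop (𝓝 1) := by
    have h := (tendsto_tsum_mul_pow_nhds_zero one_pos (hsum 1)).comp
      (by simpa using (tendsto_pow_atTop_nhds_zero_of_lt_one hQ0 hQ1).mul_const z)
    rwa [show g 0 = 1 by simp [hg, qPochhammer]] at h
  have key := (multipliable_one_sub_mul_pow hQ0 hQ1 z).tprod_eq_of_eq_mul_succ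
    (u := fun n ↦ G (Q ^ n * z)) (fun n ↦ by
      simp only [hshift (Q ^ n * z), pow_succ', mul_assoc]
      ring) hlim
  rw [key, qExp_neg_div_one_sub hQ0 hQ1]
  simp [hG, hg]

theorem qExp_neg_pow_succ_div_one_sub (hQ0 : 0 ≤ Q) (hQ1 : Q < 1) (n : ℕ) :
    qExp Q (-(Q ^ (n + 1) / (1 - Q))) = (∏' j : ℕ, (1 - Q ^ (j + 1))) / qPochhammer Q n := by
  rw [← tprod_one_sub_mul_pow_eq_qExp hQ0 hQ1, eq_div_iff (qPochhammer_ne_zero hQ0 hQ1 n),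
    mul_comm, qPochhammer]
  have htail : Multipliable fun j : ℕ ↦ 1 - Q ^ (j + n + 1) :=
    (multipliable_one_sub_mul_pow hQ0 hQ1 (Q ^ (n + 1))).congr fun j ↦ by ring
  rw [← Multipliable.prod_mul_tprod_nat_mul' (f := fun j ↦ 1 - Q ^ (j + 1)) htail]
  exact congrArg _ (tprod_congr fun j ↦ by ring)

theorem tprod_div_eq_tsum_pow_mul_qExp (hQ0 : 0 ≤ Q) (hQ1 : Q < 1) {x : ℝ} (hx : |x| < 1) :
    ∏' j : ℕ, (1 - Q ^ (j + 1)) / (1 - x * Q ^ j) =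
      ∑' n : ℕ, x ^ n * qExp Q (-(Q ^ (n + 1) / (1 - Q))) := by
  have heuler := tprod_one_sub_mul_pow_mul_tsum_inv_qPochhammer hQ0 hQ1 hx
  have hnum : Multipliable fun j : ℕ ↦ 1 - Q ^ (j + 1) := by
    simpa only [← pow_succ'] using multipliable_one_sub_mul_pow hQ0 hQ1 Q
  rw [hnum.tprod_div₀ (multipliable_one_sub_mul_pow hQ0 hQ1 x)
      (left_ne_zero_of_mul_eq_one heuler), div_eq_mul_inv, inv_eq_of_mul_eq_one_right heuler,
    ← tsum_mul_left]
  refine tsum_congr fun n ↦ ?_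
  rw [qExp_neg_pow_succ_div_one_sub hQ0 hQ1]
  ring

end Euler

theorem qkGamma_eq_mul_tprod {q : ℝ} (hq : 0 < q) (k : ℕ) (t : ℝ) :
    qkGamma q k t =
      (1 - q) ^ (1 - t / k) * ∏' j : ℕ, (1 - (q ^ k) ^ (j + 1)) / (1 - q ^ t * (q ^ k) ^ j) := by
  rw [qkGamma]
  congr 2
  funext j
  rw [Real.rpow_add hq, ← pow_mul, ← pow_mul, ← Real.rpow_natCast, ← Real.rpow_natCast q (k * j)]
  push_cast
  ring_nf

theorem qNum_natCast (q : ℝ) (k : ℕ) : qNum q k = (1 - q ^ k) / (1 - q) := by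
  rw [qNum, Real.rpow_natCast]

theorem qNum_rpow_div_rpow_eq {q : ℝ} (hq0 : 0 < q) (hq1 : q < 1) {k : ℕ} (hk : k ≠ 0) :
    qNum q k ^ (1 / k : ℝ) / (1 - q ^ k) ^ (1 / k : ℝ) = (1 - q) ^ (-(1 / k : ℝ)) := by
  have hQ : 0 < 1 - q ^ k := sub_pos.mpr (pow_lt_one₀ hq0.le hq1 hk)
  have hq : 0 < 1 - q := sub_pos.mpr hq1
  rw [qNum_natCast, ← Real.div_rpow (by positivity) hQ.le, div_div_cancel_left' hQ.ne',
    Real.inv_rpow hq.le, Real.rpow_neg hq.le]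

theorem pow_mul_mul_rpow_sub_one {q b : ℝ} (hq : 0 < q) (hb : 0 ≤ b) (n : ℕ) (t : ℝ) :
    q ^ n * (q ^ n * b) ^ (t - 1) = (q ^ t) ^ n * b ^ (t - 1) := by
  have hqn : 0 < q ^ n := pow_pos hq n
  rw [Real.mul_rpow hqn.le hb, ← mul_assoc]
  nth_rw 1 [← Real.rpow_one (q ^ n)]
  rw [← Real.rpow_add hqn, add_sub_cancel, ← Real.rpow_natCast, ← Real.rpow_mul hq.le,
    ← Real.rpow_natCast, ← Real.rpow_mul hq.le, mul_comm (n : ℝ)]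

theorem qkGamma_jackson_integral (q : ℝ) (hq0 : 0 < q) (hq1 : q < 1)
    (k : ℕ) (hk : 0 < k) (t : ℝ) (ht : 0 < t)
    (b : ℝ) (hb : b = qNum q (k : ℝ) ^ ((1 : ℝ) / (k : ℝ)) / (1 - q ^ k) ^ ((1 : ℝ) / (k : ℝ))) :
    qkGamma q k t =
      (1 - q) * b * ∑' n : ℕ, q ^ n * (q ^ n * b) ^ (t - 1) *
        qExp (q ^ k) (-(q ^ k * (q ^ n * b) ^ k / qNum q (k : ℝ))) := by
  have hq : 0 < 1 - q := sub_pos.mpr hq1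
  have hQ1 : q ^ k < 1 := pow_lt_one₀ hq0.le hq1 hk.ne'
  have hx : |q ^ t| < 1 := by
    rw [abs_of_pos (by positivity)]
    exact Real.rpow_lt_one hq0.le hq1 ht
  rw [qNum_rpow_div_rpow_eq hq0 hq1 hk.ne'] at hb
  have hb0 : 0 < b := hb ▸ Real.rpow_pos_of_pos hq _
  have hbk : b ^ k = (1 - q)⁻¹ := by
    rw [hb, ← Real.rpow_natCast, ← Real.rpow_mul hq.le, neg_mul, one_div_mul_cancel (by positivity),
      Real.rpow_neg_one]
  have harg : ∀ n : ℕ, q ^ k * (q ^ n * b) ^ k / qNum q k = (q ^ k) ^ (n + 1) / (1 - q ^ k) := by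
    intro n
    rw [qNum_natCast, mul_pow, hbk, ← pow_mul, mul_comm n k, pow_mul]
    field_simp
    ring
  have hprefactor : (1 - q) * b * b ^ (t - 1) = (1 - q) ^ (1 - t / k) := by
    rw [Real.rpow_sub_one hb0.ne', mul_assoc, mul_div_cancel₀ _ hb0.ne', hb,
      ← Real.rpow_mul hq.le, Real.rpow_sub hq, Real.rpow_one, neg_mul, one_div_mul_eq_div,
      Real.rpow_neg hq.le]
    ring
  rw [qkGamma_eq_mul_tprod hq0, tprod_div_eq_tsum_pow_mul_qExp (by positivity) hQ1 hx,
    ← hprefactor, mul_assoc, ← tsum_mul_left]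
  exact congrArg _ (tsum_congr fun n ↦ by rw [harg, pow_mul_mul_rpow_sub_one hq0 hb0.le]; ring)
end

section
/- For every real number 0 < q < 1, every positive integer k, every real t > 0, and every real x > 0, the Jackson q-integral from 0 to x of s^{t-1} E_{q^k}^{-q^k s^k/[k]_q} equals (1-q) x^t ∑_{n=0}^∞ (-1)^n q^{kn(n+1)/2} x^{kn} / ( [k]_q^n [n]_{q^k}! (1-q^{kn+t}) ); explicitly, (1-q) x ∑_{m=0}^∞ q^m (q^m x)^{t-1} E_{q^k}^{-q^k (q^m x)^k/[k]_q} = (1-q) x^t ∑_{n=0}^∞ (-1)^n q^{kn(n+1)/2} x^{kn} / ( [k]_q^n [n]_{q^k}! (1-q^{kn+t}) ). -/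
/-!
Expand the q-exponential into its power series in `s ^ k`. Since `[n]_Q! ≥ 1` and the
coefficients carry the factor `Q ^ (n (n - 1) / 2)`, the series converges absolutely for every
argument (ratio test), so the double series over the Jackson nodes `q ^ m x` and the power-series
index `n` is absolutely summable and the two sums may be interchanged. The Jackson integral of each
monomial `s ^ (k n + t - 1)` is a geometric series with ratio `q ^ (k n + t) < 1`, giving
`(1 - q) x ^ (k n + t) / (1 - q ^ (k n + t))`.
-/

open Filter Topology

noncomputable def qExpTerm (Q y : ℝ) (n : ℕ) : ℝ :=
  Q ^ (n * (n - 1) / 2) * y ^ n / qFact Q n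

section qExponential

variable {Q : ℝ}

theorem qExp_eq_tsum_qExpTerm (Q y : ℝ) : qExp Q y = ∑' n, qExpTerm Q y n := rfl

theorem qExpTerm_mul_pow (Q c z : ℝ) (n : ℕ) :
    qExpTerm Q (c * z) n = qExpTerm Q c n * z ^ n := by
  simp only [qExpTerm, mul_pow]
  ring

theorem qFact_succ (Q : ℝ) (n : ℕ) :
    qFact Q (n + 1) = qFact Q n * ((1 - Q ^ (n + 1)) / (1 - Q)) :=
  Finset.prod_range_succ _ _

theorem qExpTerm_succ (Q y : ℝ) (n : ℕ) :
    qExpTerm Q y (n + 1) = qExpTerm Q y n * (Q ^ n * y / ((1 - Q ^ (n + 1)) / (1 - Q))) := by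
  rw [qExpTerm, qExpTerm, qFact_succ, Nat.triangle_succ, pow_add, pow_succ, mul_div_mul_comm]
  ring

theorem one_le_one_sub_pow_div_one_sub (hQ0 : 0 ≤ Q) (hQ1 : Q < 1) {n : ℕ} (hn : n ≠ 0) :
    1 ≤ (1 - Q ^ n) / (1 - Q) := by
  rw [one_le_div (sub_pos.2 hQ1)]
  linarith [pow_le_of_le_one hQ0 hQ1.le hn]

theorem norm_qExpTerm_succ_le (hQ0 : 0 ≤ Q) (hQ1 : Q < 1) (y : ℝ) (n : ℕ) :
    ‖qExpTerm Q y (n + 1)‖ ≤ Q ^ n * ‖y‖ * ‖qExpTerm Q y n‖ := by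
  have hfac := one_le_one_sub_pow_div_one_sub hQ0 hQ1 n.succ_ne_zero
  rw [qExpTerm_succ, norm_mul, mul_comm, norm_div, norm_mul, norm_pow, Real.norm_of_nonneg hQ0,
    Real.norm_of_nonneg (zero_le_one.trans hfac)]
  gcongr
  exact div_le_self (by positivity) hfac

theorem summable_norm_qExpTerm (hQ0 : 0 ≤ Q) (hQ1 : Q < 1) (y : ℝ) :
    Summable fun n => ‖qExpTerm Q y n‖ := by
  have hsmall : ∀ᶠ n in atTop, Q ^ n * ‖y‖ ≤ 1 / 2 := by
    have h : Tendsto (fun n : ℕ => Q ^ n * ‖y‖) atTop (𝓝 0) := by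
      simpa using (tendsto_pow_atTop_nhds_zero_of_lt_one hQ0 hQ1).mul_const ‖y‖
    exact h.eventually_le_const (by norm_num)
  refine summable_of_ratio_norm_eventually_le (r := 1 / 2) (by norm_num) ?_
  filter_upwards [hsmall] with n hn
  rw [norm_norm, norm_norm]
  exact (norm_qExpTerm_succ_le hQ0 hQ1 y n).trans (by gcongr)

end qExponential

noncomputable def jacksonIntegral (q : ℝ) (f : ℝ → ℝ) (x : ℝ) : ℝ :=
  (1 - q) * x * ∑' m : ℕ, q ^ m * f (q ^ m * x)

section JacksonIntegral

variable {q : ℝ}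

theorem jacksonIntegral_congr {f g : ℝ → ℝ} {x : ℝ}
    (h : ∀ m : ℕ, f (q ^ m * x) = g (q ^ m * x)) :
    jacksonIntegral q f x = jacksonIntegral q g x := by
  simp only [jacksonIntegral, h]

theorem jacksonIntegral_const_mul (c : ℝ) (f : ℝ → ℝ) (x : ℝ) :
    jacksonIntegral q (fun s => c * f s) x = c * jacksonIntegral q f x := by
  simp only [jacksonIntegral, mul_left_comm _ c, tsum_mul_left]

theorem jacksonIntegral_tsum {f : ℕ → ℝ → ℝ} {x : ℝ}
    (h : Summable (Function.uncurry fun m n => q ^ m * f n (q ^ m * x))) :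
    jacksonIntegral q (fun s => ∑' n, f n s) x = ∑' n, jacksonIntegral q (f n) x := by
  simp only [jacksonIntegral, ← tsum_mul_left]
  exact (h.mul_left ((1 - q) * x)).tsum_comm.symm

theorem pow_mul_rpow_sub_one (hq : 0 < q) {x : ℝ} (hx : 0 < x) (m : ℕ) (u : ℝ) :
    q ^ m * (q ^ m * x) ^ (u - 1) = x ^ (u - 1) * (q ^ u) ^ m := by
  have hqm : 0 < q ^ m := pow_pos hq m
  rw [Real.mul_rpow hqm.le hx.le, Real.rpow_sub_one hqm.ne', ← Real.rpow_mul_natCast hq.le,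
    ← Real.rpow_natCast_mul hq.le]
  field_simp

theorem jacksonIntegral_rpow_sub_one (hq0 : 0 < q) (hq1 : q < 1) {u : ℝ} (hu : 0 < u) {x : ℝ}
    (hx : 0 < x) : jacksonIntegral q (fun s => s ^ (u - 1)) x = (1 - q) * x ^ u / (1 - q ^ u) := by
  have hqu : q ^ u < 1 := Real.rpow_lt_one hq0.le hq1 hu
  simp only [jacksonIntegral, pow_mul_rpow_sub_one hq0 hx, tsum_mul_left,
    tsum_geometric_of_lt_one (Real.rpow_nonneg hq0.le u) hqu]
  rw [Real.rpow_sub_one hx.ne']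
  field_simp

end JacksonIntegral

section PowerSeries

variable {q t x : ℝ} {a : ℕ → ℝ}

theorem summable_pow_mul_rpow_add_sub_one (hq0 : 0 < q) (hq1 : q < 1) (ht : 0 < t) (hx : 0 < x)
    (k : ℕ) (ha : Summable fun n => ‖a n‖ * x ^ (k * n)) :
    Summable (Function.uncurry fun (m n : ℕ) =>
      q ^ m * (a n * (q ^ m * x) ^ ((k : ℝ) * n + t - 1))) := by
  have hqt : q ^ t < 1 := Real.rpow_lt_one hq0.le hq1 ht
  have hgeom : Summable fun m : ℕ => x ^ (t - 1) * (q ^ t) ^ m :=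
    (summable_geometric_of_lt_one (by positivity) hqt).mul_left _
  refine .of_norm_bounded (hgeom.mul_of_nonneg ha (fun _ => by positivity) (fun _ => by positivity))
    fun ⟨m, n⟩ => ?_
  have hexp : (k : ℝ) * n + t - 1 = ((k * n : ℕ) : ℝ) + (t - 1) := by push_cast; ring
  have hqu : q ^ ((k : ℝ) * n + t) ≤ q ^ t :=
    Real.rpow_le_rpow_of_exponent_ge hq0 hq1.le
      (by linarith [show (0 : ℝ) ≤ k * n by positivity])
  calc ‖q ^ m * (a n * (q ^ m * x) ^ ((k : ℝ) * n + t - 1))‖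
      = ‖a n‖ * (x ^ ((k : ℝ) * n + t - 1) * (q ^ ((k : ℝ) * n + t)) ^ m) := by
        rw [mul_left_comm, pow_mul_rpow_sub_one hq0 hx, norm_mul]
        exact congrArg _ (Real.norm_of_nonneg (by positivity))
    _ ≤ ‖a n‖ * (x ^ ((k : ℝ) * n + t - 1) * (q ^ t) ^ m) := by gcongr
    _ = x ^ (t - 1) * (q ^ t) ^ m * (‖a n‖ * x ^ (k * n)) := by
        rw [hexp, Real.rpow_add hx, Real.rpow_natCast]
        ring

theorem jacksonIntegral_rpow_mul_tsum_pow (hq0 : 0 < q) (hq1 : q < 1) (ht : 0 < t) (hx : 0 < x)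
    (k : ℕ) (ha : Summable fun n => ‖a n‖ * x ^ (k * n)) :
    jacksonIntegral q (fun s => s ^ (t - 1) * ∑' n, a n * s ^ (k * n)) x =
      (1 - q) * x ^ t * ∑' n, a n * x ^ (k * n) / (1 - q ^ ((k : ℝ) * n + t)) := by
  have hexp : ∀ n : ℕ, (k : ℝ) * n + t - 1 = ((k * n : ℕ) : ℝ) + (t - 1) := fun n => by
    push_cast; ring
  have hu : ∀ n : ℕ, 0 < (k : ℝ) * n + t := fun n => by positivity
  calc jacksonIntegral q (fun s => s ^ (t - 1) * ∑' n, a n * s ^ (k * n)) x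
      = jacksonIntegral q (fun s => ∑' n : ℕ, a n * s ^ ((k : ℝ) * n + t - 1)) x := by
        refine jacksonIntegral_congr fun m => ?_
        have hs : 0 < q ^ m * x := by positivity
        rw [← tsum_mul_left]
        refine tsum_congr fun n => ?_
        rw [hexp, Real.rpow_add hs, Real.rpow_natCast]
        ring
    _ = ∑' n, a n * ((1 - q) * x ^ ((k : ℝ) * n + t) / (1 - q ^ ((k : ℝ) * n + t))) := by
        rw [jacksonIntegral_tsum (f := fun n s => a n * s ^ ((k : ℝ) * n + t - 1))
          (summable_pow_mul_rpow_add_sub_one hq0 hq1 ht hx k ha)]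
        simp only [jacksonIntegral_const_mul, jacksonIntegral_rpow_sub_one hq0 hq1 (hu _) hx]
    _ = (1 - q) * x ^ t * ∑' n, a n * x ^ (k * n) / (1 - q ^ ((k : ℝ) * n + t)) := by
        rw [← tsum_mul_left]
        refine tsum_congr fun n => ?_
        rw [Real.rpow_add hx, ← Nat.cast_mul, Real.rpow_natCast]
        ring

end PowerSeries

theorem qExpTerm_pow_neg_div (q N : ℝ) (k n : ℕ) :
    qExpTerm (q ^ k) (-(q ^ k / N)) n =
      (-1) ^ n * q ^ (k * n * (n + 1) / 2) / (N ^ n * qFact (q ^ k) n) := by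
  have hexp : k * (n * (n - 1) / 2) + k * n = k * n * (n + 1) / 2 := by
    rw [← mul_add, ← Nat.triangle_succ, Nat.add_sub_cancel, mul_comm (n + 1) n, mul_assoc,
      Nat.mul_div_assoc k (Nat.even_mul_succ_self n).two_dvd]
  rw [qExpTerm, neg_pow, div_pow, ← pow_mul, ← pow_mul, ← hexp, pow_add]
  ring

theorem jackson_integral_of_kGamma_density (q : ℝ) (hq0 : 0 < q) (hq1 : q < 1)
    (k : ℕ) (hk : 0 < k) (t : ℝ) (ht : 0 < t) (x : ℝ) (hx : 0 < x) :
    (1 - q) * x * (∑' m : ℕ, q ^ m * (q ^ m * x) ^ (t - 1) *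
        qExp (q ^ k) (-(q ^ k * (q ^ m * x) ^ k / qNum q (k : ℝ)))) =
      (1 - q) * x ^ t * ∑' n : ℕ, (-1 : ℝ) ^ n * q ^ (k * n * (n + 1) / 2) * x ^ (k * n) /
        (qNum q (k : ℝ) ^ n * qFact (q ^ k) n * (1 - q ^ ((k : ℝ) * (n : ℝ) + t))) := by
  have hqExp : ∀ s : ℝ, qExp (q ^ k) (-(q ^ k * s ^ k / qNum q k)) =
      ∑' n, qExpTerm (q ^ k) (-(q ^ k / qNum q k)) n * s ^ (k * n) := fun s => by
    rw [qExp_eq_tsum_qExpTerm,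
      show -(q ^ k * s ^ k / qNum q k) = -(q ^ k / qNum q k) * s ^ k by ring]
    simp only [qExpTerm_mul_pow, pow_mul]
  have hsum : Summable fun n => ‖qExpTerm (q ^ k) (-(q ^ k / qNum q k)) n‖ * x ^ (k * n) := by
    refine (summable_norm_qExpTerm (by positivity) (pow_lt_one₀ hq0.le hq1 hk.ne')
      (-(q ^ k / qNum q k) * x ^ k)).congr fun n => ?_
    rw [qExpTerm_mul_pow, norm_mul, ← pow_mul, Real.norm_of_nonneg (pow_nonneg hx.le (k * n))]
  calc (1 - q) * x * (∑' m : ℕ, q ^ m * (q ^ m * x) ^ (t - 1) *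
        qExp (q ^ k) (-(q ^ k * (q ^ m * x) ^ k / qNum q k)))
      = jacksonIntegral q (fun s => s ^ (t - 1) *
          ∑' n, qExpTerm (q ^ k) (-(q ^ k / qNum q k)) n * s ^ (k * n)) x := by
        simp only [jacksonIntegral, hqExp, mul_assoc]
    _ = (1 - q) * x ^ t * ∑' n, qExpTerm (q ^ k) (-(q ^ k / qNum q k)) n * x ^ (k * n) /
          (1 - q ^ ((k : ℝ) * n + t)) :=
        jacksonIntegral_rpow_mul_tsum_pow hq0 hq1 ht hx k hsum
    _ = _ := by
        simp only [qExpTerm_pow_neg_div, div_mul_eq_mul_div, div_div]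
end

section
/- For every real number 0 < q < 1, every positive integer k, and all real s, t > 0, the q,k-beta function B_{q,k}(t,s) = Γ_{q,k}(t)Γ_{q,k}(s)/Γ_{q,k}(t+s) satisfies the closed formula B_{q,k}(t,s) = (1-q) · (1-q^k)_{q^k}^{s/k - 1} / (1-q^t)_{q^k}^{s/k}; explicitly, B_{q,k}(t,s) = (1-q) · ∏_{j=0}^∞ (1-q^{k(j+1)})/(1-q^{s+jk}) · ∏_{j=0}^∞ (1-q^{t+s+jk})/(1-q^{t+jk}). -/
/-- The q,k-beta function B_{q,k}(t,s) = Γ_{q,k}(t)Γ_{q,k}(s)/Γ_{q,k}(t+s). -/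
noncomputable def qkBeta (q : ℝ) (k : ℕ) (t s : ℝ) : ℝ :=
  qkGamma q k t * qkGamma q k s / qkGamma q k (t + s)

/-- The q^k-power (1+x)_{q^k}^s = ∏_{j=0}^∞ (1+q^{jk}x)/(1+q^{k(s+j)}x). -/
noncomputable def qkPow (q : ℝ) (k : ℕ) (x s : ℝ) : ℝ :=
  ∏' j : ℕ, (1 + q ^ ((j : ℝ) * (k : ℝ)) * x) / (1 + q ^ ((k : ℝ) * (s + (j : ℝ))) * x)

/-!
Every infinite product in sight is a quotient of the convergent products
`(q^a; q^k)_∞ = ∏_j (1 - q^(a + jk))`, which are positive for `a > 0`. In these terms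
`Γ_{q,k}(t) = (1-q)^(1-t/k) (q^k; q^k)_∞ / (q^t; q^k)_∞`, and the two `q^k`-powers are
`(q^k; q^k)_∞ / (q^s; q^k)_∞` and `(q^t; q^k)_∞ / (q^(t+s); q^k)_∞`; both formulas reduce to
`B_{q,k}(t,s) = (1-q) (q^k; q^k)_∞ (q^(t+s); q^k)_∞ / ((q^t; q^k)_∞ (q^s; q^k)_∞)`.
-/

open Real

/-- The shifted factorial `(q^a; q^k)_∞`. -/
noncomputable def qkPoch (q : ℝ) (k : ℕ) (a : ℝ) : ℝ :=
  ∏' j : ℕ, (1 - q ^ (a + (j : ℝ) * (k : ℝ)))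

section
variable {q : ℝ} {k : ℕ}

lemma rpow_add_natCast_mul (hq0 : 0 < q) (a : ℝ) (j : ℕ) :
    q ^ (a + (j : ℝ) * (k : ℝ)) = q ^ a * (q ^ (k : ℝ)) ^ j := by
  rw [rpow_add hq0, mul_comm (j : ℝ), rpow_mul hq0.le, rpow_natCast]

lemma one_sub_rpow_add_natCast_mul_pos (hq0 : 0 < q) (hq1 : q < 1) {a : ℝ} (ha : 0 < a)
    (j : ℕ) : 0 < 1 - q ^ (a + (j : ℝ) * (k : ℝ)) :=
  sub_pos.2 <| rpow_lt_one hq0.le hq1 (by positivity)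

lemma summable_log_one_sub_rpow_add_natCast_mul (hq0 : 0 < q) (hq1 : q < 1) (hk : 0 < k)
    (a : ℝ) : Summable fun j : ℕ => log (1 - q ^ (a + (j : ℝ) * (k : ℝ))) := by
  have hr : q ^ (k : ℝ) < 1 := rpow_lt_one hq0.le hq1 (by exact_mod_cast hk)
  have hgeom : Summable fun j : ℕ => -(q ^ (a + (j : ℝ) * (k : ℝ))) := by
    simp_rw [rpow_add_natCast_mul hq0]
    exact ((summable_geometric_of_lt_one (by positivity) hr).mul_left _).neg
  simpa [sub_eq_add_neg] using summable_log_one_add_of_summable hgeom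

lemma hasProd_qkPoch (hq0 : 0 < q) (hq1 : q < 1) (hk : 0 < k) {a : ℝ} (ha : 0 < a) :
    HasProd (fun j : ℕ => 1 - q ^ (a + (j : ℝ) * (k : ℝ))) (qkPoch q k a) :=
  (multipliable_of_summable_log (one_sub_rpow_add_natCast_mul_pos hq0 hq1 ha)
    (summable_log_one_sub_rpow_add_natCast_mul hq0 hq1 hk a)).hasProd

lemma qkPoch_pos (hq0 : 0 < q) (hq1 : q < 1) (hk : 0 < k) {a : ℝ} (ha : 0 < a) :
    0 < qkPoch q k a := by
  rw [qkPoch, ← rexp_tsum_eq_tprod (one_sub_rpow_add_natCast_mul_pos hq0 hq1 ha)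
    (summable_log_one_sub_rpow_add_natCast_mul hq0 hq1 hk a)]
  exact exp_pos _

lemma tprod_div_eq_qkPoch_div (hq0 : 0 < q) (hq1 : q < 1) (hk : 0 < k) {a b : ℝ}
    (ha : 0 < a) (hb : 0 < b) :
    ∏' j : ℕ, (1 - q ^ (a + (j : ℝ) * (k : ℝ))) / (1 - q ^ (b + (j : ℝ) * (k : ℝ))) =
      qkPoch q k a / qkPoch q k b :=
  ((hasProd_qkPoch hq0 hq1 hk ha).div₀ (hasProd_qkPoch hq0 hq1 hk hb)
    (qkPoch_pos hq0 hq1 hk hb).ne').tprod_eq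

lemma tprod_qkGamma_eq_qkPoch_div (hq0 : 0 < q) (hq1 : q < 1) (hk : 0 < k) {t : ℝ}
    (ht : 0 < t) :
    ∏' j : ℕ, (1 - q ^ ((k : ℝ) * ((j : ℝ) + 1))) / (1 - q ^ (t + (j : ℝ) * (k : ℝ))) =
      qkPoch q k k / qkPoch q k t := by
  rw [← tprod_div_eq_qkPoch_div hq0 hq1 hk (by exact_mod_cast hk) ht]
  simp_rw [mul_add, mul_one, add_comm (k : ℝ), mul_comm (k : ℝ)]

lemma qkGamma_eq_qkPoch_div (hq0 : 0 < q) (hq1 : q < 1) (hk : 0 < k) {t : ℝ} (ht : 0 < t) :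
    qkGamma q k t = (1 - q) ^ (1 - t / (k : ℝ)) * (qkPoch q k k / qkPoch q k t) := by
  rw [qkGamma, tprod_qkGamma_eq_qkPoch_div hq0 hq1 hk ht]

lemma qkPow_neg_rpow_eq_qkPoch_div (hq0 : 0 < q) (hq1 : q < 1) (hk : 0 < k) {b s : ℝ}
    (hb : 0 < b) (hbs : 0 < b + k * s) :
    qkPow q k (-(q ^ b)) s = qkPoch q k b / qkPoch q k (b + k * s) := by
  rw [qkPow, ← tprod_div_eq_qkPoch_div hq0 hq1 hk hb hbs]
  congr 1 with j
  simp only [mul_neg, ← rpow_add hq0, ← sub_eq_add_neg]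
  ring_nf

lemma qkBeta_eq_qkPoch (hq0 : 0 < q) (hq1 : q < 1) (hk : 0 < k) {t s : ℝ} (ht : 0 < t)
    (hs : 0 < s) :
    qkBeta q k t s = (1 - q) * (qkPoch q k k * qkPoch q k (t + s)) /
      (qkPoch q k t * qkPoch q k s) := by
  have hkR : (0 : ℝ) < k := by exact_mod_cast hk
  have hq : 0 < 1 - q := sub_pos.2 hq1
  have hrpow : (1 - q) ^ (1 - t / (k : ℝ)) * (1 - q) ^ (1 - s / (k : ℝ)) =
      (1 - q) * (1 - q) ^ (1 - (t + s) / (k : ℝ)) := by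
    rw [← rpow_add hq, show 1 - t / (k : ℝ) + (1 - s / k) = 1 + (1 - (t + s) / k) by ring,
      rpow_add hq, rpow_one]
  have := qkPoch_pos hq0 hq1 hk hkR
  have := qkPoch_pos hq0 hq1 hk ht
  have := qkPoch_pos hq0 hq1 hk hs
  have := qkPoch_pos hq0 hq1 hk (add_pos ht hs)
  have := rpow_pos_of_pos hq (1 - (t + s) / (k : ℝ))
  rw [qkBeta, qkGamma_eq_qkPoch_div hq0 hq1 hk ht, qkGamma_eq_qkPoch_div hq0 hq1 hk hs,
    qkGamma_eq_qkPoch_div hq0 hq1 hk (add_pos ht hs), mul_mul_mul_comm, hrpow]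
  field_simp

end

theorem qkBeta_closed_formula (q : ℝ) (hq0 : 0 < q) (hq1 : q < 1)
    (k : ℕ) (hk : 0 < k) (t s : ℝ) (ht : 0 < t) (hs : 0 < s) :
    qkBeta q k t s =
      (1 - q) * qkPow q k (-(q ^ k)) (s / (k : ℝ) - 1) / qkPow q k (-(q ^ t)) (s / (k : ℝ)) ∧
    qkBeta q k t s =
      (1 - q) * (∏' j : ℕ, (1 - q ^ ((k : ℝ) * ((j : ℝ) + 1))) / (1 - q ^ (s + (j : ℝ) * (k : ℝ)))) *
        ∏' j : ℕ, (1 - q ^ (t + s + (j : ℝ) * (k : ℝ))) / (1 - q ^ (t + (j : ℝ) * (k : ℝ))) := by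
  have hkR : (0 : ℝ) < k := by exact_mod_cast hk
  have hks : (k : ℝ) * (s / k) = s := mul_div_cancel₀ s hkR.ne'
  have hPowk : qkPow q k (-(q ^ k)) (s / (k : ℝ) - 1) = qkPoch q k k / qkPoch q k s := by
    have hshift : (k : ℝ) + k * (s / k - 1) = s := by rw [mul_sub, hks]; ring
    rw [← rpow_natCast, qkPow_neg_rpow_eq_qkPoch_div hq0 hq1 hk hkR (hshift.symm ▸ hs), hshift]
  have hPowt : qkPow q k (-(q ^ t)) (s / (k : ℝ)) = qkPoch q k t / qkPoch q k (t + s) := by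
    rw [qkPow_neg_rpow_eq_qkPoch_div hq0 hq1 hk ht (by linarith), hks]
  have := qkPoch_pos hq0 hq1 hk ht
  have := qkPoch_pos hq0 hq1 hk hs
  have := qkPoch_pos hq0 hq1 hk (add_pos ht hs)
  rw [qkBeta_eq_qkPoch hq0 hq1 hk ht hs, hPowk, hPowt, tprod_qkGamma_eq_qkPoch_div hq0 hq1 hk hs,
    tprod_div_eq_qkPoch_div hq0 hq1 hk (add_pos ht hs) ht]
  constructor <;> field_simp
end

section
/- For every real number k > 0, every real t > 0, and every natural number n, the Pochhammer k-symbol equals the ratio of k-gamma values: (t)_{n,k} = ∏_{j=0}^{n-1} (t+jk) = Γ_k(t+nk)/Γ_k(t) = (1/Γ_k(t)) · ∫_0^∞ x^{t+nk-1} e^{-x^k/k} dx. -/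
open MeasureTheory

/-- The k-gamma function Γ_k(t) = ∫_0^∞ x^{t-1} e^{-x^k/k} dx. -/
noncomputable def kGamma (k t : ℝ) : ℝ :=
  ∫ x in Set.Ioi (0 : ℝ), x ^ (t - 1) * Real.exp (-x ^ k / k)

/-- The Pochhammer k-symbol (t)_{n,k} = ∏_{j=0}^{n-1} (t+jk). -/
noncomputable def kPochhammer (k t : ℝ) (n : ℕ) : ℝ :=
  ∏ j ∈ Finset.range n, (t + (j : ℝ) * k)

lemma kGamma_eq (k : ℝ) (hk : 0 < k) (t : ℝ) (ht : 0 < t) :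
    kGamma k t = k ^ (t / k - 1) * Real.Gamma (t / k) := by
  unfold kGamma
  have h : ∀ x : ℝ, x ^ (t - 1) * Real.exp (-x ^ k / k)
      = x ^ (t - 1) * Real.exp (-(1/k) * x ^ k) := by
    intro x; rw [neg_div, neg_mul, one_div, inv_mul_eq_div]
  simp_rw [h]
  rw [integral_rpow_mul_exp_neg_mul_rpow hk (by linarith) (by positivity)]
  rw [sub_add_cancel]
  rw [one_div, ← Real.rpow_neg_one k, ← Real.rpow_mul hk.le, ← Real.rpow_add hk]
  rw [show (-1 : ℝ) * (-t / k) + -1 = t / k - 1 by ring]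

lemma kGamma_pos (k : ℝ) (hk : 0 < k) (t : ℝ) (ht : 0 < t) : 0 < kGamma k t := by
  rw [kGamma_eq k hk t ht]
  exact mul_pos (Real.rpow_pos_of_pos hk _) (Real.Gamma_pos_of_pos (by positivity))

lemma kGamma_add (k : ℝ) (hk : 0 < k) (t : ℝ) (ht : 0 < t) :
    kGamma k (t + k) = t * kGamma k t := by
  rw [kGamma_eq k hk t ht, kGamma_eq k hk (t + k) (by linarith)]
  have h1 : (t + k) / k = t / k + 1 := by field_simp
  rw [h1, Real.Gamma_add_one (by positivity), add_sub_cancel_right]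
  have hkk : k ^ (t / k) = k ^ (t / k - 1) * k := by
    rw [← Real.rpow_add_one hk.ne']; ring_nf
  rw [hkk]
  field_simp

lemma kGamma_pochhammer (k : ℝ) (hk : 0 < k) (t : ℝ) (ht : 0 < t) (n : ℕ) :
    kGamma k (t + (n : ℝ) * k) = kPochhammer k t n * kGamma k t := by
  induction n with
  | zero => simp [kPochhammer]
  | succ m ih =>
    have h : t + ((m : ℕ) + 1 : ℝ) * k = (t + (m : ℝ) * k) + k := by ring
    rw [Nat.cast_succ, h, kGamma_add k hk _ (by positivity), ih]
    simp only [kPochhammer, Finset.prod_range_succ]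
    ring

theorem kPochhammer_eq_ratio_of_kGamma (k : ℝ) (hk : 0 < k) (t : ℝ) (ht : 0 < t) (n : ℕ) :
    kPochhammer k t n = kGamma k (t + (n : ℝ) * k) / kGamma k t ∧
    kPochhammer k t n =
      (1 / kGamma k t) * ∫ x in Set.Ioi (0 : ℝ),
        x ^ (t + (n : ℝ) * k - 1) * Real.exp (-x ^ k / k) := by
  have hpos := kGamma_pos k hk t ht
  have h := kGamma_pochhammer k hk t ht n
  constructor
  · rw [h]; field_simp
  · have : (∫ x in Set.Ioi (0 : ℝ),
        x ^ (t + (n : ℝ) * k - 1) * Real.exp (-x ^ k / k)) = kGamma k (t + (n : ℝ) * k) := rfl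
    rw [this, h]; field_simp
end
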